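/- Let w : (0,∞) → (0,∞) be measurable and suppose (1/w) ∗ (1/w)(t) ≤ 1/w(t) for all t > 0 (convolution on (0,∞)). Then for all f, g in the weighted space L²_w(0,∞), the convolution f ∗ g satisfies ‖f ∗ g‖_{L²_w} ≤ ‖f‖_{L²_w} ‖g‖_{L²_w}; i.e., (L²_w(0,∞), ∗) is a Banach algebra. -/

import Mathlib

/-!
By the weighted Cauchy–Schwarz inequality with weight `w(τ) w(t - τ)`,
`|(f ∗ g)(t)|² ≤ ((|f|² w) ∗ (|g|² w))(t) · ((1/w) ∗ (1/w))(t) ≤ ((|f|² w) ∗ (|g|² w))(t) / w(t)`,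
and by Tonelli the integral over `(0, ∞)` of the convolution of two nonnegative functions is the
product of their integrals.
-/

open MeasureTheory Set ENNReal

theorem enorm_integral_sq_le_lintegral_mul_lintegral_inv {α E : Type*}
    [MeasurableSpace α] [NormedAddCommGroup E] [NormedSpace ℝ E] {μ : Measure α}
    {f : α → E} {ρ : α → ℝ≥0∞} (hf : AEStronglyMeasurable f μ) (hρ : AEMeasurable ρ μ)
    (hρ0 : ∀ᵐ x ∂μ, ρ x ≠ 0) (hρtop : ∀ᵐ x ∂μ, ρ x ≠ ∞) :
    ‖∫ x, f x ∂μ‖ₑ ^ 2 ≤ (∫⁻ x, ‖f x‖ₑ ^ 2 * ρ x ∂μ) * ∫⁻ x, (ρ x)⁻¹ ∂μ := by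
  have h_split : ∀ᵐ x ∂μ,
      ‖f x‖ₑ = (‖f x‖ₑ ^ 2 * ρ x) ^ (1 / 2 : ℝ) * (ρ x)⁻¹ ^ (1 / 2 : ℝ) := by
    filter_upwards [hρ0, hρtop] with x h0 htop
    rw [← ENNReal.mul_rpow_of_nonneg _ _ (by norm_num), mul_assoc,
      ENNReal.mul_inv_cancel h0 htop, mul_one, ← ENNReal.rpow_natCast, ← ENNReal.rpow_mul]
    norm_num
  have h_holder := ENNReal.lintegral_mul_norm_pow_le ((hf.enorm.pow_const 2).mul hρ) hρ.inv
    (by norm_num : (0 : ℝ) ≤ 1 / 2) (by norm_num : (0 : ℝ) ≤ 1 / 2) (by norm_num)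
  calc ‖∫ x, f x ∂μ‖ₑ ^ 2 ≤ (∫⁻ x, ‖f x‖ₑ ∂μ) ^ 2 := by
        gcongr; exact enorm_integral_le_lintegral_enorm f
    _ ≤ ((∫⁻ x, ‖f x‖ₑ ^ 2 * ρ x ∂μ) ^ (1 / 2 : ℝ) * (∫⁻ x, (ρ x)⁻¹ ∂μ) ^ (1 / 2 : ℝ)) ^ 2 := by
        rw [lintegral_congr_ae h_split]; gcongr; exact h_holder
    _ = (∫⁻ x, ‖f x‖ₑ ^ 2 * ρ x ∂μ) * ∫⁻ x, (ρ x)⁻¹ ∂μ := by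
        rw [← ENNReal.mul_rpow_of_nonneg _ _ (by norm_num), ← ENNReal.rpow_natCast,
          ← ENNReal.rpow_mul]
        norm_num

theorem lintegral_lintegral_mul_sub {G : Type*} [MeasurableSpace G] [AddGroup G]
    [MeasurableAdd G] [MeasurableSub₂ G] {μ : Measure G} [SFinite μ] [μ.IsAddRightInvariant]
    {F H : G → ℝ≥0∞} (hF : Measurable F) (hH : Measurable H) :
    ∫⁻ t, ∫⁻ τ, F τ * H (t - τ) ∂μ ∂μ = (∫⁻ t, F t ∂μ) * ∫⁻ t, H t ∂μ := by
  rw [lintegral_lintegral_swap ((hF.comp measurable_snd).mul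
    (hH.comp (measurable_fst.sub measurable_snd))).aemeasurable]
  have h_inner : ∀ τ, ∫⁻ t, F τ * H (t - τ) ∂μ = F τ * ∫⁻ t, H t ∂μ := fun τ ↦ by
    rw [lintegral_const_mul _ (f := fun t ↦ H (t - τ)) (hH.comp (measurable_sub_const τ)),
      lintegral_sub_right_eq_self]
  simp_rw [h_inner]
  exact lintegral_mul_const _ hF

theorem setLIntegral_Ioo_mul_sub_eq_lintegral_indicator (F H : ℝ → ℝ≥0∞) (t : ℝ) :
    ∫⁻ τ in Ioo 0 t, F τ * H (t - τ) =
      ∫⁻ τ, (Ioi 0).indicator F τ * (Ioi 0).indicator H (t - τ) := by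
  rw [← lintegral_indicator measurableSet_Ioo]
  congr 1 with τ
  by_cases hτ : τ ∈ Ioo 0 t
  · rw [indicator_of_mem hτ, indicator_of_mem (mem_Ioi.2 hτ.1),
      indicator_of_mem (mem_Ioi.2 (sub_pos.2 hτ.2))]
  · rw [indicator_of_notMem hτ]
    rcases not_and_or.1 hτ with h | h
    · rw [indicator_of_notMem (show τ ∉ Ioi 0 from h), zero_mul]
    · rw [indicator_of_notMem (show t - τ ∉ Ioi 0 by simpa using h), mul_zero]

theorem lintegral_Ioi_setLIntegral_Ioo_mul_sub {F H : ℝ → ℝ≥0∞} (hF : Measurable F)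
    (hH : Measurable H) :
    ∫⁻ t in Ioi 0, ∫⁻ τ in Ioo 0 t, F τ * H (t - τ) =
      (∫⁻ t in Ioi 0, F t) * ∫⁻ t in Ioi 0, H t := by
  have h_support : (fun t ↦ ∫⁻ τ in Ioo 0 t, F τ * H (t - τ)).support ⊆ Ioi 0 := by
    intro t ht
    by_contra h
    exact ht (by dsimp only; rw [Ioo_eq_empty (show ¬(0 : ℝ) < t from h), Measure.restrict_empty,
      lintegral_zero_measure])
  simp_rw [setLIntegral_eq_of_support_subset h_support,
    setLIntegral_Ioo_mul_sub_eq_lintegral_indicator,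
    lintegral_lintegral_mul_sub (hF.indicator measurableSet_Ioi) (hH.indicator measurableSet_Ioi),
    lintegral_indicator measurableSet_Ioi]

theorem enorm_integral_Ioo_mul_sub_sq_mul_le {𝕜 : Type*} [RCLike 𝕜] {w : ℝ → ℝ}
    (hwpos : ∀ t > 0, 0 < w t) (hwmeas : Measurable w) {t : ℝ} (ht : 0 < t)
    (hconv : ∫⁻ τ in Ioo 0 t, ENNReal.ofReal (1 / (w τ * w (t - τ))) ≤ ENNReal.ofReal (1 / w t))
    {f g : ℝ → 𝕜} (hf : Measurable f) (hg : Measurable g) :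
    ‖∫ τ in Ioo 0 t, f τ * g (t - τ)‖ₑ ^ 2 * ENNReal.ofReal (w t) ≤
      ∫⁻ τ in Ioo 0 t, ‖f τ‖ₑ ^ 2 * ENNReal.ofReal (w τ) *
        (‖g (t - τ)‖ₑ ^ 2 * ENNReal.ofReal (w (t - τ))) := by
  have hw_Ioo : ∀ τ ∈ Ioo 0 t, 0 < w τ ∧ 0 < w (t - τ) := fun τ hτ ↦
    ⟨hwpos τ hτ.1, hwpos (t - τ) (sub_pos.2 hτ.2)⟩
  have h_inv : ∀ τ ∈ Ioo 0 t, (ENNReal.ofReal (w τ) * ENNReal.ofReal (w (t - τ)))⁻¹ =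
      ENNReal.ofReal (1 / (w τ * w (t - τ))) := fun τ hτ ↦ by
    obtain ⟨h₁, h₂⟩ := hw_Ioo τ hτ
    rw [one_div, ofReal_inv_of_pos (mul_pos h₁ h₂), ofReal_mul h₁.le]
  have h_cs := enorm_integral_sq_le_lintegral_mul_lintegral_inv
    (μ := volume.restrict (Ioo 0 t)) (f := fun τ ↦ f τ * g (t - τ))
    (ρ := fun τ ↦ ENNReal.ofReal (w τ) * ENNReal.ofReal (w (t - τ)))
    (hf.mul (hg.comp (measurable_const_sub t))).aestronglyMeasurable
    (hwmeas.ennreal_ofReal.mul (hwmeas.comp (measurable_const_sub t)).ennreal_ofReal).aemeasurable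
    ((ae_restrict_mem measurableSet_Ioo).mono fun τ hτ ↦
      mul_ne_zero (ofReal_pos.2 (hw_Ioo τ hτ).1).ne' (ofReal_pos.2 (hw_Ioo τ hτ).2).ne')
    (ae_of_all _ fun τ ↦ mul_ne_top ofReal_ne_top ofReal_ne_top)
  rw [setLIntegral_congr_fun measurableSet_Ioo h_inv] at h_cs
  calc ‖∫ τ in Ioo 0 t, f τ * g (t - τ)‖ₑ ^ 2 * ENNReal.ofReal (w t)
      ≤ (∫⁻ τ in Ioo 0 t, ‖f τ‖ₑ ^ 2 * ENNReal.ofReal (w τ) *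
          (‖g (t - τ)‖ₑ ^ 2 * ENNReal.ofReal (w (t - τ)))) *
          (ENNReal.ofReal (1 / w t) * ENNReal.ofReal (w t)) := by
        rw [← mul_assoc]
        gcongr
        refine h_cs.trans (mul_le_mul' (lintegral_mono fun τ ↦ le_of_eq ?_) hconv)
        rw [enorm_mul]
        ring
    _ = _ := by
        have hwt := hwpos t ht
        rw [← ofReal_mul (one_div_nonneg.2 hwt.le), one_div_mul_cancel hwt.ne', ofReal_one,
          mul_one]

/-- If `(1/w) ∗ (1/w)(t) ≤ 1/w(t)` on `(0,∞)`, then convolution is submultiplicative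
on the weighted space `L²_w(0,∞)`: `‖f ∗ g‖²_{L²_w} ≤ ‖f‖²_{L²_w} ‖g‖²_{L²_w}`. -/
theorem stmt6 (w : ℝ → ℝ) (hwpos : ∀ t > 0, 0 < w t) (hwmeas : Measurable w)
    (hconv : ∀ t > 0,
      (∫⁻ τ in Ioo (0 : ℝ) t, ENNReal.ofReal (1 / (w τ * w (t - τ)))) ≤
        ENNReal.ofReal (1 / w t))
    (f g : ℝ → ℂ) (hf : Measurable f) (hg : Measurable g) :
    (∫⁻ t in Ioi (0 : ℝ),
        (‖∫ τ in Ioo (0 : ℝ) t, f τ * g (t - τ)‖₊ : ℝ≥0∞) ^ 2 * ENNReal.ofReal (w t)) ≤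
      (∫⁻ t in Ioi (0 : ℝ), (‖f t‖₊ : ℝ≥0∞) ^ 2 * ENNReal.ofReal (w t)) *
        (∫⁻ t in Ioi (0 : ℝ), (‖g t‖₊ : ℝ≥0∞) ^ 2 * ENNReal.ofReal (w t)) := by
  calc _ ≤ ∫⁻ t in Ioi 0, ∫⁻ τ in Ioo 0 t, ‖f τ‖ₑ ^ 2 * ENNReal.ofReal (w τ) *
        (‖g (t - τ)‖ₑ ^ 2 * ENNReal.ofReal (w (t - τ))) :=
      setLIntegral_mono' measurableSet_Ioi fun t ht ↦
        enorm_integral_Ioo_mul_sub_sq_mul_le hwpos hwmeas ht (hconv t ht) hf hg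
    _ = _ := lintegral_Ioi_setLIntegral_Ioo_mul_sub
      ((hf.enorm.pow_const 2).mul hwmeas.ennreal_ofReal)
      ((hg.enorm.pow_const 2).mul hwmeas.ennreal_ofReal)
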